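/- arXiv:2412.14728 — 2 statements merged into one kernel-verified Lean document; each statement's English description precedes it below -/
import Mathlib

section
/- Let φ_m and φ_b be LTLf formulas over X ⊎ Y with X = X_rel ⊎ X_unr. Let A_{φ_m} and A_{φ_b} be DFAs over 2^{X∪Y} with L(A_{φ_m}) = { t | t ⊨ φ_m } and L(A_{φ_b}) = { t | t ⊨ φ_b }. Then a strategy σ : (2^X)* → 2^Y is a winning strategy for the agent in the DFA game on the synchronous product A_{φ_m} ⊗ G^rel_{A_{φ_b}} of A_{φ_m} with the belief-state DFA of A_{φ_b} if and only if σ solves LTLf synthesis under unreliable input for (φ_m, φ_b, X_unr). -/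
/-! ## Automata -/

/-- A deterministic finite automaton (DFA) over alphabet `α` with states `S`:
a designated initial state, a total transition function, and a set of accepting states. -/
structure DFA' (α : Type*) (S : Type*) where
  start : S
  step : S → α → S
  accept : Set S

namespace DFA'

variable {α S : Type*}

/-- The state reached from `s` after reading the word `w`. -/
def evalFrom (M : DFA' α S) (s : S) (w : List α) : S :=
  w.foldl M.step s

/-- A DFA accepts a finite word iff its unique run from the initial state ends in an
accepting state. -/
def Accepts (M : DFA' α S) (w : List α) : Prop :=
  M.evalFrom M.start w ∈ M.accept

/-- The complement of a DFA, obtained by complementing its set of accepting states. -/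
def compl (M : DFA' α S) : DFA' α S :=
  { M with accept := M.acceptᶜ }

/-- The synchronous product of two DFAs over the same alphabet. -/
def prod {S₁ S₂ : Type*} (M₁ : DFA' α S₁) (M₂ : DFA' α S₂) : DFA' α (S₁ × S₂) where
  start := (M₁.start, M₂.start)
  step := fun p a => (M₁.step p.1 a, M₂.step p.2 a)
  accept := {p | p.1 ∈ M₁.accept ∧ p.2 ∈ M₂.accept}

end DFA'

/-- A nondeterministic finite automaton (NFA) over alphabet `α` with states `S`:
a designated initial state, a transition function into sets of states, and a set of
accepting states. -/
structure NFA' (α : Type*) (S : Type*) where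
  start : S
  step : S → α → Set S
  accept : Set S

namespace NFA'

variable {α S : Type*}

/-- One step of the subset construction. -/
def stepSet (M : NFA' α S) (T : Set S) (a : α) : Set S :=
  ⋃ s ∈ T, M.step s a

/-- The set of states reachable from a state in `T` after reading the word `w`. -/
def evalFrom (M : NFA' α S) (T : Set S) (w : List α) : Set S :=
  w.foldl M.stepSet T

/-- An NFA accepts a finite word iff some run from the initial state on that word
ends in an accepting state. -/
def Accepts (M : NFA' α S) (w : List α) : Prop :=
  ∃ s ∈ M.evalFrom {M.start} w, s ∈ M.accept

/-- The determinization `D(M)` of an NFA `M` by the subset construction. -/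
def det (M : NFA' α S) : DFA' α (Set S) where
  start := {M.start}
  step := M.stepSet
  accept := {T | ∃ s ∈ T, s ∈ M.accept}

end NFA'

/-- A DFA viewed as an NFA. -/
def DFA'.toNFA' {α S : Type*} (M : DFA' α S) : NFA' α S where
  start := M.start
  step := fun s a => {M.step s a}
  accept := M.accept

/-! ## Traces -/

/-- Two finite traces over `2^P` are equivalent up to the variables in `V`
(written `t' ~_{-V} t` in the paper): they have the same length and at every position
they contain exactly the same variables of `P \ V`. -/
def EquivUpTo {P : Type*} (V : Set P) (t t' : List (Set P)) : Prop :=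
  List.Forall₂ (fun a b => a \ V = b \ V) t t'

/-- The existentially abstracted NFA `N_{∃V}`: same states, initial and accepting states,
and `δ'(s, a) = { s' | ∃ a' with a ~_{-V} a' and s' ∈ δ(s, a') }`. -/
def NFA'.abstract {P S : Type*} (M : NFA' (Set P) S) (V : Set P) : NFA' (Set P) S :=
  { M with step := fun s a => {s' | ∃ a' : Set P, a \ V = a' \ V ∧ s' ∈ M.step s a'} }

/-- The belief-state DFA `G^rel_A` of a DFA `A` over `2^{X ∪ Y}` with unreliable input
variables `Xunr ⊆ X`: states are sets of states of `A`, the initial state is `{s₀}`,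
`∂(B, a) = { s' | ∃ s ∈ B, ∃ a' with a ~_{-Xunr} a' and δ(s, a') = s' }`, and a belief
state `B` is accepting iff `B ⊆ F`. -/
def DFA'.belief {X Y S : Type*} (A : DFA' (Set (X ⊕ Y)) S) (Xunr : Set X) :
    DFA' (Set (X ⊕ Y)) (Set S) where
  start := {A.start}
  step := fun B a => {s' | ∃ s ∈ B, ∃ a' : Set (X ⊕ Y),
    a \ (Sum.inl '' Xunr) = a' \ (Sum.inl '' Xunr) ∧ A.step s a' = s'}
  accept := {B | B ⊆ A.accept}

/-! ## LTLf and QLTLf -/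

/-- LTLf formulas over propositional variables `P`. -/
inductive LTLf (P : Type*) where
  | atom : P → LTLf P
  | not : LTLf P → LTLf P
  | and : LTLf P → LTLf P → LTLf P
  | next : LTLf P → LTLf P
  | until_ : LTLf P → LTLf P → LTLf P

/-- Satisfaction `t, i ⊨ φ` of an LTLf formula at position `i` (0-indexed) of a finite
trace `t`. -/
def LTLf.Sat {P : Type*} (t : List (Set P)) : LTLf P → ℕ → Prop
  | .atom a, i => ∃ h : i < t.length, a ∈ t.get ⟨i, h⟩
  | .not φ, i => ¬ LTLf.Sat t φ i
  | .and φ ψ, i => LTLf.Sat t φ i ∧ LTLf.Sat t ψ i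
  | .next φ, i => i + 1 < t.length ∧ LTLf.Sat t φ (i + 1)
  | .until_ φ ψ, i => ∃ j, i ≤ j ∧ j < t.length ∧ LTLf.Sat t ψ j ∧
      ∀ k, i ≤ k → k < j → LTLf.Sat t φ k

/-- QLTLf formulas over propositional variables `P`: LTLf extended with second-order
existential quantification over propositional variables. -/
inductive QLTLf (P : Type*) where
  | atom : P → QLTLf P
  | not : QLTLf P → QLTLf P
  | and : QLTLf P → QLTLf P → QLTLf P
  | next : QLTLf P → QLTLf P
  | until_ : QLTLf P → QLTLf P → QLTLf P
  | ex : P → QLTLf P → QLTLf P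

/-- Satisfaction `t, i ⊨ φ` of a QLTLf formula at position `i` (0-indexed) of a finite
trace `t`; `t, i ⊨ ∃X. φ` iff there is a trace `t'` with `t' ~_{-{X}} t` and `t', i ⊨ φ`. -/
def QLTLf.Sat {P : Type*} : List (Set P) → QLTLf P → ℕ → Prop
  | t, .atom a, i => ∃ h : i < t.length, a ∈ t.get ⟨i, h⟩
  | t, .not φ, i => ¬ QLTLf.Sat t φ i
  | t, .and φ ψ, i => QLTLf.Sat t φ i ∧ QLTLf.Sat t ψ i
  | t, .next φ, i => i + 1 < t.length ∧ QLTLf.Sat t φ (i + 1)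
  | t, .until_ φ ψ, i => ∃ j, i ≤ j ∧ j < t.length ∧ QLTLf.Sat t ψ j ∧
      ∀ k, i ≤ k → k < j → QLTLf.Sat t φ k
  | t, .ex p φ, i => ∃ t', EquivUpTo {p} t' t ∧ QLTLf.Sat t' φ i

/-- Universal second-order quantification `∀X. φ := ¬∃X. ¬φ`. -/
def QLTLf.all {P : Type*} (p : P) (φ : QLTLf P) : QLTLf P :=
  .not (.ex p (.not φ))

/-- The embedding of (quantifier-free) LTLf formulas into QLTLf. -/
def LTLf.toQ {P : Type*} : LTLf P → QLTLf P
  | .atom a => .atom a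
  | .not φ => .not φ.toQ
  | .and φ ψ => .and φ.toQ ψ.toQ
  | .next φ => .next φ.toQ
  | .until_ φ ψ => .until_ φ.toQ ψ.toQ

/-! ## Strategies, plays and synthesis -/

section Synthesis

variable {X Y : Type*}

/-- The letter `X ∪ Y ∈ 2^{X ∪ Y}` combining an input letter `A ∈ 2^X` and an output
letter `B ∈ 2^Y`. -/
def combine (A : Set X) (B : Set Y) : Set (X ⊕ Y) :=
  Sum.inl '' A ∪ Sum.inr '' B

/-- The finite trace `((X₀ ∪ Y₀), …, (X_k ∪ Y_k))` with `Y_i = σ(X₀, …, X_{i-1})`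
produced by the strategy `σ` against the infinite input sequence `env`. -/
def playTrace (σ : List (Set X) → Set Y) (env : ℕ → Set X) (k : ℕ) :
    List (Set (X ⊕ Y)) :=
  (List.range (k + 1)).map fun i => combine (env i) (σ ((List.range i).map env))

/-- The strategy `σ` is winning for the agent in the DFA game on `G`: for every infinite
input sequence there is a `k` such that the run of `G` on the induced finite trace ends
in an accepting state. -/
def Winning {S : Type*} (G : DFA' (Set (X ⊕ Y)) S) (σ : List (Set X) → Set Y) : Prop :=
  ∀ env : ℕ → Set X, ∃ k : ℕ, G.Accepts (playTrace σ env k)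

/-- The strategy `σ` realizes the LTLf formula `φ` in standard LTLf synthesis. -/
def Realizes (σ : List (Set X) → Set Y) (φ : LTLf (X ⊕ Y)) : Prop :=
  ∀ env : ℕ → Set X, ∃ k : ℕ, LTLf.Sat (playTrace σ env k) φ 0

/-- The strategy `σ` realizes QLTLf synthesis for the QLTLf formula `ψ`. -/
def RealizesQ (σ : List (Set X) → Set Y) (ψ : QLTLf (X ⊕ Y)) : Prop :=
  ∀ env : ℕ → Set X, ∃ k : ℕ, QLTLf.Sat (playTrace σ env k) ψ 0

/-- The strategy `σ` solves LTLf synthesis under unreliable input for main specification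
`φm`, backup specification `φb`, and unreliable input variables `Xunr`: for every
infinite input sequence there is a `k` such that the induced finite trace `t` satisfies
`φm` and every trace `t'` with `t' ~_{-Xunr} t` satisfies `φb`. -/
def SolvesUnreliable (σ : List (Set X) → Set Y) (φm φb : LTLf (X ⊕ Y))
    (Xunr : Set X) : Prop :=
  ∀ env : ℕ → Set X, ∃ k : ℕ,
    LTLf.Sat (playTrace σ env k) φm 0 ∧
    ∀ t', EquivUpTo (Sum.inl '' Xunr) t' (playTrace σ env k) → LTLf.Sat t' φb 0

end Synthesis

/-!
By induction on the word, the belief state reached on a trace `t` is exactly the set of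
states that `Ab` reaches on the traces `t' ~_{-Xunr} t`. Hence the belief state is
accepting iff every such `t'` is accepted by `Ab`, i.e. satisfies `φb` (these traces are
nonempty, as `t` is), and the product accepts `t` iff in addition `t ⊨ φm`.
-/

theorem EquivUpTo.symm {P : Type*} {V : Set P} {t t' : List (Set P)}
    (h : EquivUpTo V t t') : EquivUpTo V t' t :=
  (h.imp fun _ _ e => e.symm).flip

theorem EquivUpTo.ne_nil {P : Type*} {V : Set P} {t t' : List (Set P)}
    (h : EquivUpTo V t t') (ht : t ≠ []) : t' ≠ [] := by
  rintro rfl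
  exact ht (List.forall₂_nil_right_iff.mp h)

namespace DFA'

variable {α X Y S S₁ S₂ : Type*}

theorem evalFrom_prod (M₁ : DFA' α S₁) (M₂ : DFA' α S₂) (w : List α) (s₁ : S₁) (s₂ : S₂) :
    (M₁.prod M₂).evalFrom (s₁, s₂) w = (M₁.evalFrom s₁ w, M₂.evalFrom s₂ w) := by
  induction w generalizing s₁ s₂ with
  | nil => rfl
  | cons a w ih => exact ih _ _

theorem accepts_prod (M₁ : DFA' α S₁) (M₂ : DFA' α S₂) (w : List α) :
    (M₁.prod M₂).Accepts w ↔ M₁.Accepts w ∧ M₂.Accepts w := by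
  unfold Accepts
  rw [show (M₁.prod M₂).start = (M₁.start, M₂.start) from rfl, evalFrom_prod]
  rfl

theorem evalFrom_belief (A : DFA' (Set (X ⊕ Y)) S) (Xunr : Set X)
    (w : List (Set (X ⊕ Y))) (B : Set S) :
    (A.belief Xunr).evalFrom B w =
      {s' | ∃ s ∈ B, ∃ w', EquivUpTo (Sum.inl '' Xunr) w w' ∧ A.evalFrom s w' = s'} := by
  induction w generalizing B with
  | nil =>
    ext s'
    simp only [evalFrom, List.foldl_nil, EquivUpTo, List.forall₂_nil_left_iff,
      Set.mem_ofPred_eq, exists_eq_left, exists_eq_right]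
  | cons a w ih =>
    ext s'
    change s' ∈ (A.belief Xunr).evalFrom ((A.belief Xunr).step B a) w ↔ _
    rw [ih]
    constructor
    · rintro ⟨_, ⟨s, hs, a', ha', rfl⟩, w', hw', rfl⟩
      exact ⟨s, hs, a' :: w', .cons ha' hw', rfl⟩
    · rintro ⟨s, hs, _, hw, rfl⟩
      cases hw with
      | cons ha' hw' => exact ⟨_, ⟨s, hs, _, ha', rfl⟩, _, hw', rfl⟩

theorem accepts_belief (A : DFA' (Set (X ⊕ Y)) S) (Xunr : Set X) (w : List (Set (X ⊕ Y))) :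
    (A.belief Xunr).Accepts w ↔ ∀ w', EquivUpTo (Sum.inl '' Xunr) w w' → A.Accepts w' := by
  change (A.belief Xunr).evalFrom {A.start} w ⊆ A.accept ↔ _
  rw [evalFrom_belief]
  constructor
  · exact fun h w' hw' => h ⟨A.start, rfl, w', hw', rfl⟩
  · rintro h _ ⟨_, rfl, w', hw', rfl⟩
    exact h w' hw'

end DFA'

theorem playTrace_ne_nil {X Y : Type*} (σ : List (Set X) → Set Y) (env : ℕ → Set X) (k : ℕ) :
    playTrace σ env k ≠ [] := by
  simp [playTrace]

theorem accepts_prod_belief_iff {X Y S₁ S₂ : Type*} {φm φb : LTLf (X ⊕ Y)} {Xunr : Set X}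
    {Am : DFA' (Set (X ⊕ Y)) S₁} {Ab : DFA' (Set (X ⊕ Y)) S₂}
    (hAm : ∀ t : List (Set (X ⊕ Y)), t ≠ [] → (Am.Accepts t ↔ LTLf.Sat t φm 0))
    (hAb : ∀ t : List (Set (X ⊕ Y)), t ≠ [] → (Ab.Accepts t ↔ LTLf.Sat t φb 0))
    {t : List (Set (X ⊕ Y))} (ht : t ≠ []) :
    (Am.prod (Ab.belief Xunr)).Accepts t ↔
      LTLf.Sat t φm 0 ∧ ∀ t', EquivUpTo (Sum.inl '' Xunr) t' t → LTLf.Sat t' φb 0 := by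
  rw [DFA'.accepts_prod, DFA'.accepts_belief, hAm t ht]
  refine and_congr_right fun _ => forall_congr' fun t' => ⟨fun h ht' => ?_, fun h ht' => ?_⟩
  · exact (hAb t' (ht'.symm.ne_nil ht)).mp (h ht'.symm)
  · exact (hAb t' (ht'.ne_nil ht)).mpr (h ht'.symm)

/-- Let `φm`, `φb` be LTLf formulas over `X ⊎ Y` with unreliable input
variables `Xunr ⊆ X`, and let `Am`, `Ab` be DFAs with `L(Am) = { t | t ⊨ φm }` and
`L(Ab) = { t | t ⊨ φb }`. Then a strategy `σ` is winning for the agent in the DFA game on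
the synchronous product `Am ⊗ G^rel_{Ab}` iff `σ` solves LTLf synthesis under unreliable
input for `(φm, φb, Xunr)`. -/
theorem belief_technique_correct {X Y S₁ S₂ : Type*}
    (φm φb : LTLf (X ⊕ Y)) (Xunr : Set X)
    (Am : DFA' (Set (X ⊕ Y)) S₁)
    (hAm : ∀ t : List (Set (X ⊕ Y)), t ≠ [] → (Am.Accepts t ↔ LTLf.Sat t φm 0))
    (Ab : DFA' (Set (X ⊕ Y)) S₂)
    (hAb : ∀ t : List (Set (X ⊕ Y)), t ≠ [] → (Ab.Accepts t ↔ LTLf.Sat t φb 0))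
    (σ : List (Set X) → Set Y) :
    Winning (Am.prod (Ab.belief Xunr)) σ ↔
      SolvesUnreliable σ φm φb Xunr :=
  forall_congr' fun env => exists_congr fun k =>
    accepts_prod_belief_iff hAm hAb (playTrace_ne_nil σ env k)
end

section
/- Let ψ be a QLTLf formula over P, let X₁, …, Xₙ ∈ P, and let A be an NFA over 2^P with L(A) = { t | t ⊨ ψ }. Then the determinization of the existential abstraction, D(A_{∃X₁,…,Xₙ}), recognizes exactly the models of the existentially quantified formula: L(D(A_{∃X₁,…,Xₙ})) = { t | t ⊨ ∃X₁. … ∃Xₙ. ψ }. -/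
/-! Each transition of `A_{∃V}` on a letter `a` is a transition of `A` on some letter agreeing
with `a` outside `V`, so the runs of `A_{∃V}` on `t` are the runs of `A` on traces `t' ~_{-V} t`.
On the formula side, `~_{-(V ∪ W)}` is the relational composite of `~_{-V}` and `~_{-W}`, so the
models of `∃X₁. … ∃Xₙ. ψ` are the traces `~_{-{X₁,…,Xₙ}}`-equivalent to a model of `ψ`. Both
sides thus describe the same traces, and the subset construction preserves the language. -/

theorem List.forall₂_comp_iff {α β γ : Type*} {R : α → β → Prop} {R' : β → γ → Prop}
    {l₁ : List α} {l₃ : List γ} :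
    Forall₂ (Relation.Comp R R') l₁ l₃ ↔ ∃ l₂, Forall₂ R l₁ l₂ ∧ Forall₂ R' l₂ l₃ := by
  constructor
  · intro h
    induction h with
    | nil => exact ⟨[], .nil, .nil⟩
    | cons hab _ ih =>
      obtain ⟨b, hab, hbc⟩ := hab
      obtain ⟨l₂, h₁, h₂⟩ := ih
      exact ⟨b :: l₂, .cons hab h₁, .cons hbc h₂⟩
  · rintro ⟨l₂, h₁, h₂⟩
    induction h₁ generalizing l₃ with
    | nil => cases h₂; exact .nil
    | cons hab _ ih =>
      cases h₂ with
      | cons hbc h₂ => exact .cons ⟨_, hab, hbc⟩ (ih h₂)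

theorem Set.sdiff_union_eq_sdiff_union_iff {α : Type*} (V W a c : Set α) :
    a \ (V ∪ W) = c \ (V ∪ W) ↔ ∃ b, a \ V = b \ V ∧ b \ W = c \ W := by
  constructor
  · -- `b` agrees with `a` on `W` and with `c` off `W`.
    intro h
    refine ⟨c \ W ∪ a ∩ W, ?_, ?_⟩ <;> ext x <;> have hx := Set.ext_iff.mp h x <;>
      simp only [Set.mem_sdiff, Set.mem_union, Set.mem_inter_iff] at hx ⊢ <;> tauto
  · rintro ⟨b, hab, hbc⟩
    ext x
    have hx₁ := Set.ext_iff.mp hab x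
    have hx₂ := Set.ext_iff.mp hbc x
    simp only [Set.mem_sdiff, Set.mem_union] at hx₁ hx₂ ⊢
    tauto

namespace NFA'

variable {α S : Type*}

theorem det_accepts_iff (M : NFA' α S) (w : List α) : M.det.Accepts w ↔ M.Accepts w :=
  Iff.rfl

theorem stepSet_singleton (M : NFA' α S) (s : S) (a : α) : M.stepSet {s} a = M.step s a := by
  simp [stepSet]

theorem mem_evalFrom_iff (M : NFA' α S) (T : Set S) (w : List α) (s' : S) :
    s' ∈ M.evalFrom T w ↔ ∃ s ∈ T, s' ∈ M.evalFrom {s} w := by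
  induction w generalizing T with
  | nil => simp [evalFrom]
  | cons a w ih =>
    have ih_step (s : S) := ih (M.step s a)
    change s' ∈ M.evalFrom (M.stepSet T a) w ↔ ∃ s ∈ T, s' ∈ M.evalFrom (M.stepSet {s} a) w
    simp only [stepSet_singleton, ih_step]
    rw [ih]
    simp only [stepSet, Set.mem_iUnion₂, exists_prop]
    constructor
    · rintro ⟨s₁, ⟨s, hs, hs₁⟩, hs'⟩
      exact ⟨s, hs, s₁, hs₁, hs'⟩
    · rintro ⟨s, hs, s₁, hs₁, hs'⟩
      exact ⟨s₁, ⟨s, hs, hs₁⟩, hs'⟩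

theorem mem_evalFrom_singleton_cons (M : NFA' α S) (s s' : S) (a : α) (w : List α) :
    s' ∈ M.evalFrom {s} (a :: w) ↔ ∃ s₁ ∈ M.step s a, s' ∈ M.evalFrom {s₁} w := by
  change s' ∈ M.evalFrom (M.stepSet {s} a) w ↔ _
  rw [stepSet_singleton, mem_evalFrom_iff]

end NFA'

section Abstraction

variable {P S : Type*}

theorem EquivUpTo.length_eq {V : Set P} {t t' : List (Set P)} (h : EquivUpTo V t t') :
    t.length = t'.length :=
  List.Forall₂.length_eq h

theorem equivUpTo_empty_iff {t t' : List (Set P)} : EquivUpTo ∅ t t' ↔ t = t' := by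
  simp [EquivUpTo, List.forall₂_eq_eq_eq]

theorem equivUpTo_union_iff {V W : Set P} {t t' : List (Set P)} :
    EquivUpTo (V ∪ W) t t' ↔ ∃ t₁, EquivUpTo V t t₁ ∧ EquivUpTo W t₁ t' := by
  unfold EquivUpTo
  rw [← List.forall₂_comp_iff]
  simp only [Set.sdiff_union_eq_sdiff_union_iff]
  rfl

theorem QLTLf.sat_foldr_ex_iff (ψ : QLTLf P) (Us : List P) (t : List (Set P)) (i : ℕ) :
    QLTLf.Sat t (Us.foldr QLTLf.ex ψ) i ↔
      ∃ t', EquivUpTo {x | x ∈ Us} t' t ∧ QLTLf.Sat t' ψ i := by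
  induction Us generalizing t with
  | nil => simp [equivUpTo_empty_iff]
  | cons u Us ih =>
    have hvars : {x | x ∈ u :: Us} = {x | x ∈ Us} ∪ {u} := by
      ext x
      simp
    simp only [List.foldr_cons, QLTLf.Sat, ih, hvars, equivUpTo_union_iff]
    grind

theorem NFA'.abstract_mem_evalFrom_iff (A : NFA' (Set P) S) (V : Set P) (t : List (Set P))
    (s s' : S) :
    s' ∈ (A.abstract V).evalFrom {s} t ↔ ∃ t', EquivUpTo V t' t ∧ s' ∈ A.evalFrom {s} t' := by
  induction t generalizing s with
  | nil => simp [EquivUpTo, List.forall₂_nil_right_iff, NFA'.evalFrom]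
  | cons a t ih =>
    simp only [NFA'.mem_evalFrom_singleton_cons, ih, EquivUpTo, List.forall₂_cons_right_iff]
    constructor
    · rintro ⟨s₁, ⟨a', ha', hs₁⟩, t', ht', hs'⟩
      exact ⟨a' :: t', ⟨a', t', ha'.symm, ht', rfl⟩,
        (A.mem_evalFrom_singleton_cons _ _ _ _).mpr ⟨s₁, hs₁, hs'⟩⟩
    · rintro ⟨_, ⟨a', t', ha', ht', rfl⟩, hs'⟩
      obtain ⟨s₁, hs₁, hs'⟩ := (A.mem_evalFrom_singleton_cons _ _ _ _).mp hs'
      exact ⟨s₁, ⟨a', ha'.symm, hs₁⟩, t', ht', hs'⟩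

theorem NFA'.abstract_accepts_iff (A : NFA' (Set P) S) (V : Set P) (t : List (Set P)) :
    (A.abstract V).Accepts t ↔ ∃ t', EquivUpTo V t' t ∧ A.Accepts t' := by
  simp only [NFA'.Accepts, NFA'.abstract_mem_evalFrom_iff]
  constructor
  · rintro ⟨s, ⟨t', ht', hs⟩, hacc⟩
    exact ⟨t', ht', s, hs, hacc⟩
  · rintro ⟨t', ht', s, hs, hacc⟩
    exact ⟨s, ⟨t', ht', hs⟩, hacc⟩

end Abstraction

/-- Let `ψ` be a QLTLf formula over `P`, `X₁, …, Xₙ ∈ P`, and `A` an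
NFA over `2^P` with `L(A) = { t | t ⊨ ψ }`. Then `D(A_{∃X₁,…,Xₙ})` recognizes exactly the
models of `∃X₁. … ∃Xₙ. ψ`. -/
theorem det_abstract_recognizes_exists {P S : Type*}
    (ψ : QLTLf P) (Us : List P) (A : NFA' (Set P) S)
    (hA : ∀ t : List (Set P), t ≠ [] → (A.Accepts t ↔ QLTLf.Sat t ψ 0)) :
    ∀ t : List (Set P), t ≠ [] →
      ((A.abstract {x | x ∈ Us}).det.Accepts t ↔
        QLTLf.Sat t (Us.foldr QLTLf.ex ψ) 0) := by
  intro t ht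
  rw [NFA'.det_accepts_iff, NFA'.abstract_accepts_iff, QLTLf.sat_foldr_ex_iff]
  refine exists_congr fun t' => and_congr_right fun ht' => hA t' ?_
  rw [← List.length_pos_iff, ht'.length_eq, List.length_pos_iff]
  exact ht
end
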